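/- arXiv:2502.06514 — 2 statements merged into one kernel-verified Lean document; each statement's English description precedes it below -/
import Mathlib

section
/- Let H ≥ 1/2 and let b_{x,m} : ℝ×𝒫₂(ℝ)→ℝ and b_{μ,m} : ℝ×𝒫₂(ℝ)×ℝ→ℝ (m = 1,…,p) be measurable, bounded and Lipschitz, with g := ∑_m θ⁰_m b_{x,m} and h := ∑_m θ⁰_m b_{μ,m} in the defining equations of the Malliavin derivatives, and define D_s^i b_m(X^{i,N}_t, μ^N_t) := b_{x,m}(X^{i,N}_t,μ^N_t) D_s^i X^{i,N}_t + N^{−1}∑_{k=1}^N b_{μ,m}(X^{i,N}_t,μ^N_t,X^{k,N}_t) D_s^i X^{k,N}_t. Then there exist constants c, N₀ > 0 such that for all N ≥ N₀, almost surely, for all 0 ≤ s ≤ t ≤ T, all i ∈ {1,…,N} and all m: |D_s^i b_m(X^{i,N}_t, μ^N_t) − σ b_{x,m}(X^{i,N}_t, μ^N_t) exp(∫_s^t ⟨θ⁰, (b_{x,1},…,b_{x,p})(X^{i,N}_r, μ^N_r)⟩ dr)| ≤ c/N. -/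
/-! Fix `ω`, `s` and `i`. The Malliavin derivatives `u k t = D_s^i X^{k,N}_t` solve the linear
system `u_k' = g_k u_k + N⁻¹ ∑_{k'} h_{k k'} u_{k'}` with coefficients bounded by some `G`, started
from `u_k(s) = σ δ_{ki}`. Grönwall's inequality gives three bounds in turn: all components are
bounded; the off-diagonal components `k ≠ i` start at `0` and see the diagonal one only through
the weight `1/N`, so they are `O(1/N)`; and then `u_i - σ exp (∫_s^t g_i)`, which starts at `0` and
whose derivative is `g_i` times itself plus the mean-field term, is `O(1/N)` as well. The chain-rule
expression `b_x u_i + N⁻¹ ∑ b_μ u_k` is therefore within `O(1/N)` of `σ b_x exp (∫_s^t g_i)`. The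
coefficients are continuous along the paths, as the integral equations need for differentiation,
because they are Lipschitz in `W₂` and the diagonal coupling gives
`W₂(μ^N(x), μ^N(y))² ≤ N⁻¹ ∑ⱼ |xⱼ - yⱼ|²`. -/

open MeasureTheory ProbabilityTheory Filter

noncomputable section

/-- The 2-Wasserstein distance between two Borel measures on `ℝ`. -/
def W2 (μ ν : Measure ℝ) : ℝ :=
  Real.sqrt (sInf {r : ℝ | ∃ m : Measure (ℝ × ℝ), IsProbabilityMeasure m ∧
    m.map Prod.fst = μ ∧ m.map Prod.snd = ν ∧ r = ∫ z, |z.1 - z.2| ^ 2 ∂m})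

/-- The empirical measure `N⁻¹ ∑_j δ_{x_j}` of `N` points. -/
def empMeas {N : ℕ} (x : Fin N → ℝ) : Measure ℝ :=
  ((N : ENNReal))⁻¹ • ∑ j, Measure.dirac (x j)

/-- The interacting particle system together with its Malliavin derivatives
`D i k s t ω = D_s^i X^{k,N}_t`, whose Volterra equations have coefficients
`g = ∑_m θ_m b_{x,m}` and `h = ∑_m θ_m b_{μ,m}`. -/
structure MIPSX (Ω : Type*) [MeasurableSpace Ω] (P : Measure Ω)
    (T σ cb Lb : ℝ) (p : ℕ) (θ : Fin p → ℝ)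
    (b : Fin p → ℝ → Measure ℝ → ℝ)
    (bx : Fin p → ℝ → Measure ℝ → ℝ) (bμ : Fin p → ℝ → Measure ℝ → ℝ → ℝ)
    (μ₀ : Measure ℝ)
    (N : ℕ) (X B : Fin N → ℝ → Ω → ℝ) (X0 : Fin N → Ω → ℝ)
    (D : Fin N → Fin N → ℝ → ℝ → Ω → ℝ) : Prop where
  prob : IsProbabilityMeasure P
  hT : 0 < T
  hσ : 0 < σ
  hcb : 0 < cb
  hbmeas : ∀ m, Measurable fun z : ℝ × Measure ℝ => b m z.1 z.2
  hbLip : ∀ m x y μ ν, |b m x μ - b m y ν| ≤ cb * (|x - y| + W2 μ ν)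
  hb0 : ∀ m, |b m 0 (Measure.dirac 0)| ≤ cb
  hbxmeas : ∀ m, Measurable fun z : ℝ × Measure ℝ => bx m z.1 z.2
  hbxbd : ∀ m x μ, |bx m x μ| ≤ Lb
  hbxLip : ∀ m x y μ ν, |bx m x μ - bx m y ν| ≤ Lb * (|x - y| + W2 μ ν)
  hbμmeas : ∀ m, Measurable fun z : (ℝ × Measure ℝ) × ℝ => bμ m z.1.1 z.1.2 z.2
  hbμbd : ∀ m x μ z, |bμ m x μ z| ≤ Lb
  hbμLip : ∀ m x y μ ν z w,
    |bμ m x μ z - bμ m y ν w| ≤ Lb * (|x - y| + W2 μ ν + |z - w|)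
  hBmeas : ∀ i, Measurable fun z : ℝ × Ω => B i z.1 z.2
  hBcont : ∀ᵐ ω ∂P, ∀ i, ContinuousOn (fun t => B i t ω) (Set.Icc 0 T)
  hB0 : ∀ i, ∀ᵐ ω ∂P, B i 0 ω = 0
  hX0meas : ∀ i, Measurable (X0 i)
  hX0law : ∀ i, P.map (X0 i) = μ₀
  hX0indep : iIndepFun (m := fun _ => Real.measurableSpace) X0 P
  hmom : ∀ k : ℕ, Integrable (fun x : ℝ => |x| ^ k) μ₀
  hXmeas : ∀ i, Measurable fun z : ℝ × Ω => X i z.1 z.2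
  hXcont : ∀ᵐ ω ∂P, ∀ i, ContinuousOn (fun t => X i t ω) (Set.Icc 0 T)
  hXeq : ∀ᵐ ω ∂P, ∀ i, ∀ t ∈ Set.Icc (0 : ℝ) T,
    X i t ω = X0 i ω
      + (∫ s in (0 : ℝ)..t, ∑ m, θ m * b m (X i s ω) (empMeas fun j => X j s ω))
      + σ * B i t ω
  hDmeas : ∀ j i s, Measurable fun z : ℝ × Ω => D j i s z.1 z.2
  hDcont : ∀ᵐ ω ∂P, ∀ j i, ∀ s ∈ Set.Icc (0 : ℝ) T,
    ContinuousOn (fun t => D j i s t ω) (Set.Icc s T)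
  hDeq : ∀ᵐ ω ∂P, ∀ j i, ∀ s ∈ Set.Icc (0 : ℝ) T, ∀ t ∈ Set.Icc s T,
    D j i s t ω = (if i = j then σ else 0)
      + ∫ r in s..t,
          ((∑ m, θ m * bx m (X i r ω) (empMeas fun k => X k r ω)) * D j i s r ω
            + (N : ℝ)⁻¹ * ∑ k,
                (∑ m, θ m * bμ m (X i r ω) (empMeas fun k' => X k' r ω) (X k r ω))
                  * D j k s r ω)
  hDzero : ∀ᵐ ω ∂P, ∀ j i s t, t < s → D j i s t ω = 0

open Set Topology

theorem W2_empMeas_le {N : ℕ} (hN : 0 < N) (x y : Fin N → ℝ) :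
    W2 (empMeas x) (empMeas y) ≤ Real.sqrt ((N : ℝ)⁻¹ * ∑ j, |x j - y j| ^ 2) := by
  set coupling : Measure (ℝ × ℝ) := ((N : ENNReal))⁻¹ • ∑ j, Measure.dirac (x j, y j)
  have hmarg : ∀ (f : ℝ × ℝ → ℝ) (hf : Measurable f),
      coupling.map f = ((N : ENNReal))⁻¹ • ∑ j, Measure.dirac (f (x j, y j)) := by
    intro f hf
    rw [Measure.map_smul, ← Measure.mapₗ_apply_of_measurable hf, map_sum]
    simp only [Measure.mapₗ_apply_of_measurable hf, Measure.map_dirac' hf]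
  have hprob : IsProbabilityMeasure coupling := by
    constructor
    simp [coupling, ENNReal.inv_mul_cancel (by exact_mod_cast hN.ne') (ENNReal.natCast_ne_top N)]
  have hcost : ∫ z, |z.1 - z.2| ^ 2 ∂coupling = (N : ℝ)⁻¹ * ∑ j, |x j - y j| ^ 2 := by
    rw [integral_smul_measure, integral_finsetSum_measure fun j _ => integrable_dirac
      enorm_lt_top]
    simp [ENNReal.toReal_inv, integral_dirac]
  refine Real.sqrt_le_sqrt (csInf_le ⟨0, ?_⟩ ⟨coupling, hprob, hmarg _ measurable_fst,
    hmarg _ measurable_snd, hcost.symm⟩)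
  rintro r ⟨m, -, -, -, rfl⟩
  exact integral_nonneg fun z => by positivity

theorem tendsto_W2_empMeas {N : ℕ} (hN : 0 < N) {Y : Fin N → ℝ → ℝ} {S : Set ℝ} {r₀ : ℝ}
    (hY : ∀ j, ContinuousWithinAt (Y j) S r₀) :
    Tendsto (fun r => W2 (empMeas fun j => Y j r) (empMeas fun j => Y j r₀))
      (𝓝[S] r₀) (𝓝 0) := by
  have hsum : ContinuousWithinAt (fun r => (N : ℝ)⁻¹ * ∑ j, |Y j r - Y j r₀| ^ 2) S r₀ :=
    continuousWithinAt_const.mul <| tendsto_finsetSum _ fun j _ =>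
      ((hY j).sub continuousWithinAt_const).abs.pow 2
  have hsqrt := (Real.continuous_sqrt.continuousAt.comp_continuousWithinAt hsum).tendsto
  simp only [Function.comp_def, sub_self, abs_zero, zero_pow two_ne_zero, Finset.sum_const_zero,
    mul_zero, Real.sqrt_zero] at hsqrt
  exact squeeze_zero (fun r => Real.sqrt_nonneg _) (fun r => W2_empMeas_le hN _ _) hsqrt

theorem continuousWithinAt_comp_empMeas {N : ℕ} (hN : 0 < N) {F : ℝ → Measure ℝ → ℝ → ℝ}
    {L : ℝ} (hF : ∀ x y μ ν z w, |F x μ z - F y ν w| ≤ L * (|x - y| + W2 μ ν + |z - w|))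
    {Y : Fin N → ℝ → ℝ} {S : Set ℝ} {r₀ : ℝ} (hY : ∀ j, ContinuousWithinAt (Y j) S r₀)
    (i k : Fin N) :
    ContinuousWithinAt (fun r => F (Y i r) (empMeas fun j => Y j r) (Y k r)) S r₀ := by
  have hdist : ∀ j, Tendsto (fun r => |Y j r - Y j r₀|) (𝓝[S] r₀) (𝓝 0) := fun j => by
    simpa using ((hY j).sub (continuousWithinAt_const (b := Y j r₀))).abs.tendsto
  rw [ContinuousWithinAt, tendsto_iff_norm_sub_tendsto_zero]
  refine squeeze_zero (fun r => norm_nonneg _) (fun r => hF _ _ _ _ _ _) ?_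
  simpa using (((hdist i).add (tendsto_W2_empMeas hN hY)).add (hdist k)).const_mul L

theorem hasDerivWithinAt_Ici_of_eq_add_integral {f φ : ℝ → ℝ} {c s T x : ℝ}
    (hφ : ContinuousOn φ (Icc s T)) (hf : ∀ t ∈ Icc s T, f t = c + ∫ r in s..t, φ r)
    (hx : x ∈ Ico s T) : HasDerivWithinAt f (φ x) (Ici x) x := by
  have hnhds : Icc s T ∈ 𝓝[Ici x] x :=
    mem_nhdsWithin.2 ⟨Iio T, isOpen_Iio, hx.2, fun y hy => ⟨hx.1.trans hy.2, le_of_lt hy.1⟩⟩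
  have hnhds' : Icc s T ∈ 𝓝[Ioi x] x := nhdsWithin_mono x Ioi_subset_Ici_self hnhds
  have hprim : HasDerivWithinAt (fun t => ∫ r in s..t, φ r) (φ x) (Ici x) x := by
    refine intervalIntegral.integral_hasDerivWithinAt_right (t := Ioi x) ?_
      ⟨Icc s T, hnhds', hφ.aestronglyMeasurable measurableSet_Icc⟩
      ((hφ x (Ico_subset_Icc_self hx)).mono_of_mem_nhdsWithin hnhds')
    exact (hφ.mono (uIcc_of_le hx.1 ▸ Icc_subset_Icc le_rfl hx.2.le)).intervalIntegrable
  exact (hprim.const_add c).congr_of_eventuallyEq (eventuallyEq_of_mem hnhds hf)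
    (hf x (Ico_subset_Icc_self hx))

theorem norm_le_of_norm_deriv_right_le {E : Type*} [NormedAddCommGroup E] [NormedSpace ℝ E]
    {f f' : ℝ → E} {s T K δ ε : ℝ} (hK : 0 < K) (hε : 0 ≤ ε)
    (hf : ContinuousOn f (Icc s T)) (hf' : ∀ x ∈ Ico s T, HasDerivWithinAt f (f' x) (Ici x) x)
    (hs : ‖f s‖ ≤ δ) (bound : ∀ x ∈ Ico s T, ‖f' x‖ ≤ K * ‖f x‖ + ε) :
    ∀ t ∈ Icc s T, ‖f t‖ ≤ (δ + ε / K) * Real.exp (K * (T - s)) := by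
  intro t ht
  have hδ : 0 ≤ δ := (norm_nonneg _).trans hs
  have hexp : Real.exp (K * (t - s)) ≤ Real.exp (K * (T - s)) := by
    gcongr
    exact ht.2
  calc ‖f t‖ ≤ gronwallBound δ K ε (t - s) :=
        norm_le_gronwallBound_of_norm_deriv_right_le hf hf' hs bound t ht
    _ = δ * Real.exp (K * (t - s)) + ε / K * (Real.exp (K * (t - s)) - 1) := by
        rw [gronwallBound_of_K_ne_0 hK.ne']
    _ ≤ (δ + ε / K) * Real.exp (K * (T - s)) := by
        have : 0 ≤ ε / K := div_nonneg hε hK.le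
        nlinarith [Real.exp_pos (K * (t - s))]

theorem abs_inv_mul_sum_mul_le {N : ℕ} {a v : Fin N → ℝ} {A V W : ℝ} (i : Fin N)
    (ha : ∀ k, |a k| ≤ A) (hvi : |v i| ≤ V) (hv : ∀ k ≠ i, |v k| ≤ W) (hW : 0 ≤ W) :
    |(N : ℝ)⁻¹ * ∑ k, a k * v k| ≤ A * (V / N + W) := by
  have hN : (0 : ℝ) < N := by exact_mod_cast i.pos
  have hA : 0 ≤ A := (abs_nonneg _).trans (ha i)
  have hrest : |∑ k ∈ Finset.univ.erase i, a k * v k| ≤ N * (A * W) := by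
    calc |∑ k ∈ Finset.univ.erase i, a k * v k|
        ≤ ∑ k ∈ Finset.univ.erase i, A * W := by
          refine (Finset.abs_sum_le_sum_abs _ _).trans (Finset.sum_le_sum fun k hk => ?_)
          rw [abs_mul]
          exact mul_le_mul (ha k) (hv k (Finset.ne_of_mem_erase hk)) (abs_nonneg _) hA
      _ ≤ N * (A * W) := by
          rw [Finset.sum_const, nsmul_eq_mul]
          gcongr
          exact_mod_cast (Finset.card_erase_le).trans_eq (Finset.card_fin N)
  calc |(N : ℝ)⁻¹ * ∑ k, a k * v k|
      = (N : ℝ)⁻¹ * |a i * v i + ∑ k ∈ Finset.univ.erase i, a k * v k| := by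
        rw [Finset.add_sum_erase _ (fun k => a k * v k) (Finset.mem_univ i), abs_mul,
          abs_of_pos (inv_pos.2 hN)]
    _ ≤ (N : ℝ)⁻¹ * (A * V + N * (A * W)) := by
        gcongr
        refine (abs_add_le _ _).trans (add_le_add ?_ hrest)
        rw [abs_mul]
        exact mul_le_mul (ha i) hvi (abs_nonneg _) hA
    _ = A * (V / N + W) := by
        field_simp

def meanFieldDrift {N : ℕ} (g : Fin N → ℝ → ℝ) (h : Fin N → Fin N → ℝ → ℝ)
    (u : Fin N → ℝ → ℝ) (k : Fin N) (r : ℝ) : ℝ :=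
  g k r * u k r + (N : ℝ)⁻¹ * ∑ k', h k k' r * u k' r

structure IsLinearMeanFieldSolution {N : ℕ} (s T G σ : ℝ) (g : Fin N → ℝ → ℝ)
    (h : Fin N → Fin N → ℝ → ℝ) (u : Fin N → ℝ → ℝ) (i : Fin N) : Prop where
  abs_g_le : ∀ k r, |g k r| ≤ G
  abs_h_le : ∀ k k' r, |h k k' r| ≤ G
  continuousOn : ∀ k, ContinuousOn (u k) (Icc s T)
  hasDerivWithinAt : ∀ k, ∀ x ∈ Ico s T,
    HasDerivWithinAt (u k) (meanFieldDrift g h u k x) (Ici x) x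
  eq_initial : ∀ k, u k s = if k = i then σ else 0

namespace IsLinearMeanFieldSolution

variable {N : ℕ} {s T G σ E : ℝ} {g : Fin N → ℝ → ℝ} {h : Fin N → Fin N → ℝ → ℝ}
  {u : Fin N → ℝ → ℝ} {i : Fin N}

theorem abs_drift_le (hu : IsLinearMeanFieldSolution s T G σ g h u i) {V W : ℝ} (k : Fin N)
    {x : ℝ} (hvi : |u i x| ≤ V) (hv : ∀ k' ≠ i, |u k' x| ≤ W) (hW : 0 ≤ W) :
    |meanFieldDrift g h u k x| ≤ G * |u k x| + G * (V / N + W) := by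
  refine (abs_add_le _ _).trans (add_le_add ?_ (abs_inv_mul_sum_mul_le i
    (fun k' => hu.abs_h_le k k' x) hvi hv hW))
  rw [abs_mul]
  exact mul_le_mul_of_nonneg_right (hu.abs_g_le k x) (abs_nonneg _)

theorem abs_le (hu : IsLinearMeanFieldSolution s T G σ g h u i) (hG : 0 < G)
    (hE : Real.exp (3 * G * (T - s)) ≤ E) : ∀ t ∈ Icc s T, ∀ k, |u k t| ≤ |σ| * E := by
  have hN : (1 : ℝ) ≤ N := by exact_mod_cast i.pos
  have hbound : ∀ x ∈ Ico s T,
      ‖fun k => meanFieldDrift g h u k x‖ ≤ 3 * G * ‖fun k => u k x‖ + 0 := by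
    intro x _
    have hcoord : ∀ k, |u k x| ≤ ‖fun k => u k x‖ := fun k =>
      norm_le_pi_norm (fun k => u k x) k
    have hmean : ‖fun k => u k x‖ / N ≤ ‖fun k => u k x‖ := div_le_self (norm_nonneg _) hN
    refine (pi_norm_le_iff_of_nonneg (by positivity)).2 fun k => ?_
    refine (hu.abs_drift_le k (hcoord i) (fun k' _ => hcoord k') (norm_nonneg _)).trans ?_
    nlinarith [hcoord k]
  have hs : ‖fun k => u k s‖ ≤ |σ| := by
    refine (pi_norm_le_iff_of_nonneg (abs_nonneg σ)).2 fun k => ?_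
    rw [Real.norm_eq_abs, hu.eq_initial k]
    split_ifs <;> simp
  intro t ht k
  have := norm_le_of_norm_deriv_right_le (by positivity) le_rfl
    (continuousOn_pi.2 hu.continuousOn)
    (fun x hx => hasDerivWithinAt_pi.2 fun k => hu.hasDerivWithinAt k x hx) hs hbound t ht
  calc |u k t| ≤ ‖fun k => u k t‖ := norm_le_pi_norm (fun k => u k t) k
    _ ≤ (|σ| + 0 / (3 * G)) * Real.exp (3 * G * (T - s)) := this
    _ ≤ |σ| * E := by
        rw [zero_div, add_zero]
        exact mul_le_mul_of_nonneg_left hE (abs_nonneg σ)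

theorem abs_le_of_ne (hu : IsLinearMeanFieldSolution s T G σ g h u i) (hG : 0 < G)
    (hE : Real.exp (3 * G * (T - s)) ≤ E) :
    ∀ t ∈ Icc s T, ∀ k ≠ i, |u k t| ≤ |σ| * E ^ 2 / N := by
  have hE0 : 0 ≤ E := (Real.exp_pos _).le.trans hE
  set offDiag : ℝ → Fin N → ℝ := fun t k => if k = i then 0 else u k t
  have hcoord : ∀ x, ∀ k ≠ i, |u k x| ≤ ‖offDiag x‖ := fun x k hk => by
    simpa [offDiag, hk] using norm_le_pi_norm (offDiag x) k
  have hderiv : ∀ x ∈ Ico s T, HasDerivWithinAt offDiag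
      (fun k => if k = i then 0 else meanFieldDrift g h u k x) (Ici x) x := by
    refine fun x hx => hasDerivWithinAt_pi.2 fun k => ?_
    by_cases hk : k = i
    · simpa [offDiag, hk] using hasDerivWithinAt_const x (Ici x) (0 : ℝ)
    · simpa [offDiag, hk] using hu.hasDerivWithinAt k x hx
  have hcont : ContinuousOn offDiag (Icc s T) := by
    refine continuousOn_pi.2 fun k => ?_
    by_cases hk : k = i
    · simpa [offDiag, hk] using continuousOn_const
    · simpa [offDiag, hk] using hu.continuousOn k
  have hs : ‖offDiag s‖ ≤ 0 := by
    refine (pi_norm_le_iff_of_nonneg le_rfl).2 fun k => ?_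
    by_cases hk : k = i <;> simp [offDiag, hk, hu.eq_initial k]
  have hbound : ∀ x ∈ Ico s T, ‖fun k => if k = i then 0 else meanFieldDrift g h u k x‖
      ≤ 3 * G * ‖offDiag x‖ + G * (|σ| * E / N) := by
    intro x hx
    refine (pi_norm_le_iff_of_nonneg (by positivity)).2 fun k => ?_
    by_cases hk : k = i
    · simp only [hk, if_true, norm_zero]
      positivity
    rw [if_neg hk, Real.norm_eq_abs]
    refine (hu.abs_drift_le k (hu.abs_le hG hE x (Ico_subset_Icc_self hx) i) (hcoord x)
      (norm_nonneg _)).trans ?_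
    nlinarith [hcoord x k hk, norm_nonneg (offDiag x)]
  intro t ht k hk
  have := norm_le_of_norm_deriv_right_le (by positivity) (by positivity) hcont hderiv hs
    hbound t ht
  calc |u k t| ≤ ‖offDiag t‖ := hcoord t k hk
    _ ≤ (0 + G * (|σ| * E / N) / (3 * G)) * Real.exp (3 * G * (T - s)) := this
    _ = |σ| * E / N / 3 * Real.exp (3 * G * (T - s)) := by field_simp; ring
    _ ≤ |σ| * E / N * E :=
        mul_le_mul (div_le_self (by positivity) (by norm_num)) hE (Real.exp_pos _).le
          (by positivity)
    _ = |σ| * E ^ 2 / N := by ring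

theorem abs_sub_exp_le (hu : IsLinearMeanFieldSolution s T G σ g h u i) (hG : 0 < G)
    (hE : Real.exp (3 * G * (T - s)) ≤ E) (hg : ContinuousOn (g i) (Icc s T)) :
    ∀ t ∈ Icc s T,
      |u i t - σ * Real.exp (∫ r in s..t, g i r)| ≤ |σ| * (E + E ^ 2) * E / N := by
  have hE0 : 0 ≤ E := (Real.exp_pos _).le.trans hE
  set w : ℝ → ℝ := fun t => u i t - σ * Real.exp (∫ r in s..t, g i r)
  have hprim : ∀ x ∈ Ico s T,
      HasDerivWithinAt (fun t => ∫ r in s..t, g i r) (g i x) (Ici x) x :=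
    fun x => hasDerivWithinAt_Ici_of_eq_add_integral hg fun t _ => (zero_add _).symm
  have hderiv : ∀ x ∈ Ico s T, HasDerivWithinAt w
      (g i x * w x + (N : ℝ)⁻¹ * ∑ k, h i k x * u k x) (Ici x) x := by
    intro x hx
    refine ((hu.hasDerivWithinAt i x hx).sub (((hprim x hx).exp).const_mul σ)).congr_deriv ?_
    simp only [w, meanFieldDrift]
    ring
  have hcont : ContinuousOn w (Icc s T) := by
    refine (hu.continuousOn i).sub (continuousOn_const.mul
      (Real.continuous_exp.comp_continuousOn ?_))
    rcases le_total s T with hsT | hTs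
    · have hint : IntegrableOn (g i) (uIcc s T) := by
        simpa only [uIcc_of_le hsT] using hg.integrableOn_Icc
      simpa only [uIcc_of_le hsT] using intervalIntegral.continuousOn_primitive_interval hint
    · exact (subsingleton_Icc_of_ge hTs).continuousOn _
  have hs : ‖w s‖ ≤ 0 := by simp [w, hu.eq_initial i]
  have hbound : ∀ x ∈ Ico s T, ‖g i x * w x + (N : ℝ)⁻¹ * ∑ k, h i k x * u k x‖
      ≤ 3 * G * ‖w x‖ + G * (|σ| * (E + E ^ 2) / N) := by
    intro x hx
    have hx' := Ico_subset_Icc_self hx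
    have hmean := abs_inv_mul_sum_mul_le i (fun k => hu.abs_h_le i k x)
      (hu.abs_le hG hE x hx' i) (hu.abs_le_of_ne hG hE x hx') (by positivity)
    have hgw : |g i x * w x| ≤ G * |w x| := by
      rw [abs_mul]
      exact mul_le_mul_of_nonneg_right (hu.abs_g_le i x) (abs_nonneg _)
    rw [Real.norm_eq_abs, Real.norm_eq_abs]
    refine (abs_add_le _ _).trans ?_
    have : |σ| * E / N + |σ| * E ^ 2 / N = |σ| * (E + E ^ 2) / N := by ring
    nlinarith [abs_nonneg (w x)]
  intro t ht
  have := norm_le_of_norm_deriv_right_le (by positivity) (by positivity) hcont hderiv hs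
    hbound t ht
  calc |w t| = ‖w t‖ := (Real.norm_eq_abs _).symm
    _ ≤ (0 + G * (|σ| * (E + E ^ 2) / N) / (3 * G)) * Real.exp (3 * G * (T - s)) := this
    _ = |σ| * (E + E ^ 2) / N / 3 * Real.exp (3 * G * (T - s)) := by field_simp; ring
    _ ≤ |σ| * (E + E ^ 2) / N * E :=
        mul_le_mul (div_le_self (by positivity) (by norm_num)) hE (Real.exp_pos _).le
          (by positivity)
    _ = |σ| * (E + E ^ 2) * E / N := by ring

theorem abs_chainRule_sub_le (hu : IsLinearMeanFieldSolution s T G σ g h u i) (hG : 0 < G)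
    (hE : Real.exp (3 * G * (T - s)) ≤ E) (hg : ContinuousOn (g i) (Icc s T)) {a A : ℝ}
    {c : Fin N → ℝ} (ha : |a| ≤ A) (hc : ∀ k, |c k| ≤ A) {t : ℝ} (ht : t ∈ Icc s T) :
    |(a * u i t + (N : ℝ)⁻¹ * ∑ k, c k * u k t) - σ * a * Real.exp (∫ r in s..t, g i r)|
      ≤ A * (|σ| * (E + E ^ 2) * (E + 1)) / N := by
  have hA : 0 ≤ A := (abs_nonneg _).trans ha
  have hmean := abs_inv_mul_sum_mul_le i hc (hu.abs_le hG hE t ht i)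
    (hu.abs_le_of_ne hG hE t ht) (by positivity)
  calc |(a * u i t + (N : ℝ)⁻¹ * ∑ k, c k * u k t) - σ * a * Real.exp (∫ r in s..t, g i r)|
      = |a * (u i t - σ * Real.exp (∫ r in s..t, g i r)) + (N : ℝ)⁻¹ * ∑ k, c k * u k t| := by
        ring_nf
    _ ≤ A * (|σ| * (E + E ^ 2) * E / N) + A * (|σ| * E / N + |σ| * E ^ 2 / N) := by
        refine (abs_add_le _ _).trans (add_le_add ?_ hmean)
        rw [abs_mul]
        exact mul_le_mul ha (hu.abs_sub_exp_le hG hE hg t ht) (abs_nonneg _) hA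
    _ = A * (|σ| * (E + E ^ 2) * (E + 1)) / N := by ring

end IsLinearMeanFieldSolution

theorem abs_sum_mul_le_sum_abs_mul {ι : Type*} (t : Finset ι) {θ f : ι → ℝ} {L : ℝ}
    (hf : ∀ m ∈ t, |f m| ≤ L) : |∑ m ∈ t, θ m * f m| ≤ (∑ m ∈ t, |θ m|) * L := by
  rw [Finset.sum_mul]
  refine (Finset.abs_sum_le_sum_abs _ _).trans (Finset.sum_le_sum fun m hm => ?_)
  rw [abs_mul]
  exact mul_le_mul_of_nonneg_left (hf m hm) (abs_nonneg _)

theorem continuousOn_meanFieldDrift {N : ℕ} {g : Fin N → ℝ → ℝ} {h : Fin N → Fin N → ℝ → ℝ}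
    {u : Fin N → ℝ → ℝ} {S : Set ℝ} (hg : ∀ k, ContinuousOn (g k) S)
    (hh : ∀ k k', ContinuousOn (h k k') S) (hu : ∀ k, ContinuousOn (u k) S) (k : Fin N) :
    ContinuousOn (meanFieldDrift g h u k) S :=
  ((hg k).mul (hu k)).add
    (continuousOn_const.mul (continuousOn_finsetSum _ fun k' _ => (hh k k').mul (hu k')))

namespace MIPSX

variable {Ω : Type*} [MeasurableSpace Ω] {P : Measure Ω} {T σ cb Lb : ℝ} {p : ℕ}
  {θ : Fin p → ℝ} {b bx : Fin p → ℝ → Measure ℝ → ℝ} {bμ : Fin p → ℝ → Measure ℝ → ℝ → ℝ}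
  {μ₀ : Measure ℝ} {N : ℕ} {X B : Fin N → ℝ → Ω → ℝ} {X0 : Fin N → Ω → ℝ}
  {D : Fin N → Fin N → ℝ → ℝ → Ω → ℝ} {ω : Ω}

theorem continuousOn_bx_coeff (hM : MIPSX Ω P T σ cb Lb p θ b bx bμ μ₀ N X B X0 D)
    (hN : 0 < N) (hX : ∀ j, ContinuousOn (fun t => X j t ω) (Icc 0 T)) (k : Fin N) :
    ContinuousOn (fun r => ∑ m, θ m * bx m (X k r ω) (empMeas fun j => X j r ω)) (Icc 0 T) :=
  continuousOn_finsetSum _ fun m _ => continuousOn_const.mul fun r hr =>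
    continuousWithinAt_comp_empMeas hN (F := fun x μ _ => bx m x μ) (L := |Lb|)
      (fun x y μ ν z w => (hM.hbxLip m x y μ ν).trans (by
        have : 0 ≤ |x - y| + W2 μ ν := add_nonneg (abs_nonneg _) (Real.sqrt_nonneg _)
        nlinarith [le_abs_self Lb, abs_nonneg (z - w), abs_nonneg Lb]))
      (fun j => hX j r hr) k k

theorem continuousOn_bμ_coeff (hM : MIPSX Ω P T σ cb Lb p θ b bx bμ μ₀ N X B X0 D)
    (hN : 0 < N) (hX : ∀ j, ContinuousOn (fun t => X j t ω) (Icc 0 T)) (k k' : Fin N) :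
    ContinuousOn (fun r => ∑ m, θ m * bμ m (X k r ω) (empMeas fun j => X j r ω) (X k' r ω))
      (Icc 0 T) :=
  continuousOn_finsetSum _ fun m _ => continuousOn_const.mul fun r hr =>
    continuousWithinAt_comp_empMeas hN (hM.hbμLip m) (fun j => hX j r hr) k k'

theorem isLinearMeanFieldSolution (hM : MIPSX Ω P T σ cb Lb p θ b bx bμ μ₀ N X B X0 D)
    (hX : ∀ j, ContinuousOn (fun t => X j t ω) (Icc 0 T))
    (hDc : ∀ j k, ∀ s ∈ Icc (0 : ℝ) T, ContinuousOn (fun t => D j k s t ω) (Icc s T))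
    (hDe : ∀ j k, ∀ s ∈ Icc (0 : ℝ) T, ∀ t ∈ Icc s T,
      D j k s t ω = (if k = j then σ else 0)
        + ∫ r in s..t,
            ((∑ m, θ m * bx m (X k r ω) (empMeas fun l => X l r ω)) * D j k s r ω
              + (N : ℝ)⁻¹ * ∑ k',
                  (∑ m, θ m * bμ m (X k r ω) (empMeas fun l => X l r ω) (X k' r ω))
                    * D j k' s r ω))
    {s : ℝ} (hs : s ∈ Icc 0 T) (i : Fin N) :
    IsLinearMeanFieldSolution s T ((∑ m, |θ m|) * |Lb| + 1) σ
      (fun k r => ∑ m, θ m * bx m (X k r ω) (empMeas fun j => X j r ω))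
      (fun k k' r => ∑ m, θ m * bμ m (X k r ω) (empMeas fun j => X j r ω) (X k' r ω))
      (fun k t => D i k s t ω) i where
  abs_g_le k r := (abs_sum_mul_le_sum_abs_mul _ fun m _ =>
    (hM.hbxbd m _ _).trans (le_abs_self Lb)).trans (le_add_of_nonneg_right zero_le_one)
  abs_h_le k k' r := (abs_sum_mul_le_sum_abs_mul _ fun m _ =>
    (hM.hbμbd m _ _ _).trans (le_abs_self Lb)).trans (le_add_of_nonneg_right zero_le_one)
  continuousOn k := hDc i k s hs
  hasDerivWithinAt k x hx := by
    have hIcc : Icc s T ⊆ Icc 0 T := Icc_subset_Icc_left hs.1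
    refine hasDerivWithinAt_Ici_of_eq_add_integral ?_ (hDe i k s hs) hx
    exact continuousOn_meanFieldDrift (fun k => (hM.continuousOn_bx_coeff i.pos hX k).mono hIcc)
      (fun k k' => (hM.continuousOn_bμ_coeff i.pos hX k k').mono hIcc) (fun k => hDc i k s hs) k
  eq_initial k := by
    simpa using hDe i k s hs s ⟨le_rfl, hs.2⟩

end MIPSX

theorem statement10_general
    (Ω : Type*) [MeasurableSpace Ω] (P : Measure Ω)
    (T σ cb Lb : ℝ) (p : ℕ) (θ : Fin p → ℝ)
    (b : Fin p → ℝ → Measure ℝ → ℝ)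
    (bx : Fin p → ℝ → Measure ℝ → ℝ) (bμ : Fin p → ℝ → Measure ℝ → ℝ → ℝ)
    (μ₀ : Measure ℝ) :
    ∃ c : ℝ, 0 < c ∧ ∃ N₀ : ℕ, 0 < N₀ ∧
      ∀ N : ℕ, N₀ ≤ N →
        ∀ (X B : Fin N → ℝ → Ω → ℝ) (X0 : Fin N → Ω → ℝ)
          (D : Fin N → Fin N → ℝ → ℝ → Ω → ℝ),
          MIPSX Ω P T σ cb Lb p θ b bx bμ μ₀ N X B X0 D →
          ∀ᵐ ω ∂P, ∀ s t : ℝ, 0 ≤ s → s ≤ t → t ≤ T → ∀ (i : Fin N) (m : Fin p),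
            |(bx m (X i t ω) (empMeas fun j => X j t ω) * D i i s t ω
                + (N : ℝ)⁻¹ * ∑ k, bμ m (X i t ω) (empMeas fun j => X j t ω)
                    (X k t ω) * D i k s t ω)
              - σ * bx m (X i t ω) (empMeas fun j => X j t ω)
                  * Real.exp (∫ r in s..t,
                      ∑ m', θ m' * bx m' (X i r ω) (empMeas fun j => X j r ω))|
              ≤ c / N := by
  set G := (∑ m, |θ m|) * |Lb| + 1
  set E := Real.exp (3 * G * T)
  refine ⟨|Lb| * (|σ| * (E + E ^ 2) * (E + 1)) + 1, by positivity, 1, one_pos, ?_⟩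
  intro N _ X B X0 D hM
  filter_upwards [hM.hXcont, hM.hDcont, hM.hDeq] with ω hX hDc hDe
  intro s t hs hst htT i m
  have hsT : s ∈ Icc 0 T := ⟨hs, hst.trans htT⟩
  have hG : 0 < G := by positivity
  have hE : Real.exp (3 * G * (T - s)) ≤ E :=
    Real.exp_le_exp.2 (mul_le_mul_of_nonneg_left (by linarith) (by positivity))
  have hu := hM.isLinearMeanFieldSolution hX hDc hDe hsT i
  refine (hu.abs_chainRule_sub_le hG hE
    ((hM.continuousOn_bx_coeff i.pos hX i).mono (Icc_subset_Icc_left hs))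
    ((hM.hbxbd m _ _).trans (le_abs_self Lb)) (fun k => (hM.hbμbd m _ _ _).trans (le_abs_self Lb))
    ⟨hst, htT⟩).trans ?_
  exact div_le_div_of_nonneg_right (le_add_of_nonneg_right zero_le_one) (Nat.cast_nonneg N)

/-- Proposition 3.7: for `H ≥ 1/2` there are `c, N₀ > 0` such that for all
`N ≥ N₀`, almost surely, for all `0 ≤ s ≤ t ≤ T`, all `i` and all `m`,
`|D_s^i b_m(X^{i,N}_t, μ^N_t) − σ ∂ₓb_m(X^{i,N}_t, μ^N_t) exp(∫_s^t ⟨θ⁰, ∂ₓb(X^{i,N}_r, μ^N_r)⟩ dr)| ≤ c/N`. -/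
theorem statement10
    (Ω : Type*) [MeasurableSpace Ω] (P : Measure Ω)
    (T H σ cb Lb : ℝ) (hH : (1 / 2 : ℝ) ≤ H) (p : ℕ) (θ : Fin p → ℝ)
    (b : Fin p → ℝ → Measure ℝ → ℝ)
    (bx : Fin p → ℝ → Measure ℝ → ℝ) (bμ : Fin p → ℝ → Measure ℝ → ℝ → ℝ)
    (μ₀ : Measure ℝ) :
    ∃ c : ℝ, 0 < c ∧ ∃ N₀ : ℕ, 0 < N₀ ∧
      ∀ N : ℕ, N₀ ≤ N →
        ∀ (X B : Fin N → ℝ → Ω → ℝ) (X0 : Fin N → Ω → ℝ)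
          (D : Fin N → Fin N → ℝ → ℝ → Ω → ℝ),
          MIPSX Ω P T σ cb Lb p θ b bx bμ μ₀ N X B X0 D →
          ∀ᵐ ω ∂P, ∀ s t : ℝ, 0 ≤ s → s ≤ t → t ≤ T → ∀ (i : Fin N) (m : Fin p),
            |(bx m (X i t ω) (empMeas fun j => X j t ω) * D i i s t ω
                + (N : ℝ)⁻¹ * ∑ k, bμ m (X i t ω) (empMeas fun j => X j t ω)
                    (X k t ω) * D i k s t ω)
              - σ * bx m (X i t ω) (empMeas fun j => X j t ω)
                  * Real.exp (∫ r in s..t,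
                      ∑ m', θ m' * bx m' (X i r ω) (empMeas fun j => X j r ω))|
              ≤ c / N :=
  statement10_general Ω P T σ cb Lb p θ b bx bμ μ₀
end
end

section
/- Fix N ∈ ℕ, 0 ≤ s ≤ T, j ∈ {1,…,N}, σ > 0 and L ≥ 0. Let a^i, c^{i,k} : [s,T] → ℝ be measurable with |a^i(r)| ≤ L and |c^{i,k}(r)| ≤ L, and let d¹,…,d^N : [s,T] → ℝ be continuous functions satisfying d^i(t) = σ·1_{i=j} + ∫_s^t ( a^i(r) d^i(r) + N^{−1} ∑_{k=1}^N c^{i,k}(r) d^k(r) ) dr for all t ∈ [s,T]. Then there exists a constant C depending only on σ, L, T (not on N, s, j) such that for all t ∈ [s,T]: |d^j(t) − σ exp(∫_s^t a^j(r) dr)| ≤ C/N. -/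
/-!
Summing the equations and using `|c^{i,k}| ≤ L`, the total mass `∑ᵢ |dⁱ|` satisfies a linear
integral inequality with rate `2L`, so Grönwall bounds it by `|σ| e^{2LT}` uniformly in `N`.
The `j`-th equation is then the scalar equation `z' = aʲ z`, solved by `σ exp (∫ aʲ)`, perturbed by
the forcing `N⁻¹ ∑ₖ c^{j,k} dᵏ`, which is `O(1/N)`; Grönwall applied to the difference gives the
bound. That `σ exp (∫ aʲ)` solves the unperturbed equation for a merely integrable `aʲ` is the
fundamental theorem of calculus for the absolutely continuous function `exp ∘ ∫ aʲ`.
-/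

open MeasureTheory intervalIntegral Set Filter Real
open scoped Topology NNReal Interval

theorem LipschitzOnWith.comp_absolutelyContinuousOnInterval {X Y : Type*} [PseudoMetricSpace X]
    [PseudoMetricSpace Y] {f : ℝ → X} {g : X → Y} {K : ℝ≥0} {u : Set X} {a b : ℝ}
    (hg : LipschitzOnWith K g u) (hf : AbsolutelyContinuousOnInterval f a b)
    (hfu : MapsTo f (uIcc a b) u) : AbsolutelyContinuousOnInterval (g ∘ f) a b := by
  have hdom : ∀ᶠ E in AbsolutelyContinuousOnInterval.totalLengthFilter ⊓
      𝓟 (AbsolutelyContinuousOnInterval.disjWithin a b),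
      ∑ i ∈ Finset.range E.1, dist (g (f (E.2 i).1)) (g (f (E.2 i).2)) ≤
        K * ∑ i ∈ Finset.range E.1, dist (f (E.2 i).1) (f (E.2 i).2) := by
    filter_upwards [mem_inf_of_right (mem_principal_self _)] with E hE
    rw [Finset.mul_sum]
    exact Finset.sum_le_sum fun i hi =>
      hg.dist_le_mul _ (hfu (hE.1 i hi).1) _ (hfu (hE.1 i hi).2)
  unfold AbsolutelyContinuousOnInterval at hf ⊢
  simpa using squeeze_zero' (.of_forall fun _ => Finset.sum_nonneg fun _ _ => dist_nonneg) hdom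
    (by simpa using hf.const_mul (K : ℝ))

theorem ContDiff.comp_absolutelyContinuousOnInterval {E F : Type*} [NormedAddCommGroup E]
    [NormedSpace ℝ E] [ProperSpace E] [NormedAddCommGroup F] [NormedSpace ℝ F] {f : ℝ → E}
    {g : E → F} {a b : ℝ} (hg : ContDiff ℝ 1 g) (hf : AbsolutelyContinuousOnInterval f a b) :
    AbsolutelyContinuousOnInterval (g ∘ f) a b := by
  obtain ⟨M, hM⟩ := hf.exists_bound
  obtain ⟨K, hK⟩ := hg.contDiffOn.exists_lipschitzOnWith one_ne_zero (convex_closedBall 0 M)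
    (isCompact_closedBall 0 M)
  exact hK.comp_absolutelyContinuousOnInterval hf fun x hx => mem_closedBall_zero_iff.2 (hM x hx)

theorem exp_integral_eq_one_add_integral {a : ℝ → ℝ} {s t : ℝ}
    (ha : IntervalIntegrable a volume s t) :
    exp (∫ r in s..t, a r) = 1 + ∫ r in s..t, a r * exp (∫ u in s..r, a u) := by
  set G : ℝ → ℝ := fun x => ∫ u in s..x, a u with hG
  have hexpG : AbsolutelyContinuousOnInterval (exp ∘ G) s t :=
    contDiff_exp.comp_absolutelyContinuousOnInterval
      (ha.absolutelyContinuousOnInterval_intervalIntegral left_mem_uIcc)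
  have hderiv : ∀ᵐ x, x ∈ Ι s t → deriv (exp ∘ G) x = a x * exp (G x) := by
    filter_upwards [ha.ae_hasDerivAt_integral] with x hx hxI
    exact ((hx (uIoc_subset_uIcc hxI) s left_mem_uIcc).exp.deriv).trans (mul_comm _ _)
  have hFTC := hexpG.integral_deriv_eq_sub
  rw [integral_congr_ae hderiv] at hFTC
  simp only [Function.comp_apply, hG, integral_same, exp_zero] at hFTC
  linarith

theorem le_mul_exp_of_le_add_mul_integral {φ : ℝ → ℝ} {a b A K : ℝ} (hK : 0 ≤ K)
    (hφ : ContinuousOn φ (Icc a b)) (h : ∀ t ∈ Icc a b, φ t ≤ A + K * ∫ r in a..t, φ r) :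
    ∀ t ∈ Icc a b, φ t ≤ A * exp (K * (t - a)) := by
  -- `w' = K φ ≤ K w`, so the differential form of Grönwall's inequality applies to `w ≥ φ`.
  set w : ℝ → ℝ := fun t => A + K * ∫ r in a..t, φ r with hw
  have hw_cont : ContinuousOn w (Icc a b) := by
    rcases le_or_gt a b with hab | hab
    · rw [← uIcc_of_le hab] at hφ ⊢
      exact continuousOn_const.add <| continuousOn_const.mul <|
        continuousOn_primitive_interval (hφ.integrableOn_compact isCompact_uIcc)
    · simp [Icc_eq_empty_of_lt hab]
  have hw_deriv : ∀ x ∈ Ico a b, HasDerivWithinAt w (K * φ x) (Ici x) x := by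
    intro x hx
    have hmem : Icc a b ∈ 𝓝[>] x := Icc_mem_nhdsGT_of_mem hx
    have hφx : IntervalIntegrable φ volume a x :=
      (hφ.mono (Icc_subset_Icc le_rfl hx.2.le)).intervalIntegrable_of_Icc hx.1
    exact ((integral_hasDerivWithinAt_right hφx
      ((hφ.stronglyMeasurableAtFilter_nhdsWithin measurableSet_Icc x).filter_mono
        (nhdsWithin_le_of_mem hmem))
      ((hφ x (Ico_subset_Icc_self hx)).mono_of_mem_nhdsWithin hmem)).const_mul K).const_add A
  intro t ht
  refine (h t ht).trans ?_
  have := le_gronwallBound_of_liminf_deriv_right_le (δ := A) (K := K) (ε := 0) hw_cont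
    (fun x hx r hr => (hw_deriv x hx).liminf_right_slope_le hr) (by simp [hw])
    (fun x hx => by
      rw [add_zero]; exact mul_le_mul_of_nonneg_left (h x (Ico_subset_Icc_self hx)) hK) t ht
  rwa [gronwallBound_ε0] at this

theorem IntervalIntegrable.of_abs_le {f : ℝ → ℝ} {a b L : ℝ} (hab : a ≤ b) (hf : Measurable f)
    (hfL : ∀ r ∈ Icc a b, |f r| ≤ L) : IntervalIntegrable f volume a b :=
  (intervalIntegrable_iff_integrableOn_Icc_of_le hab).2 <|
    IntegrableOn.of_bound measure_Icc_lt_top hf.aestronglyMeasurable L <|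
      (ae_restrict_iff' measurableSet_Icc).2 (.of_forall hfL)

theorem abs_sub_mul_exp_integral_le {α g u : ℝ → ℝ} {s T L M σ : ℝ} (hL : 0 ≤ L)
    (hα : IntervalIntegrable α volume s T) (hg : IntervalIntegrable g volume s T)
    (hαL : ∀ r ∈ Icc s T, |α r| ≤ L) (hgM : ∀ r ∈ Icc s T, |g r| ≤ M)
    (hu : ContinuousOn u (Icc s T))
    (hu_eq : ∀ t ∈ Icc s T, u t = σ + ∫ r in s..t, (α r * u r + g r)) :
    ∀ t ∈ Icc s T, |u t - σ * exp (∫ r in s..t, α r)| ≤ M * (T - s) * exp (L * (t - s)) := by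
  rcases le_or_gt s T with hsT | hTs
  swap
  · simp [Icc_eq_empty_of_lt hTs]
  rw [← uIcc_of_le hsT] at hu
  set E : ℝ → ℝ := fun t => σ * exp (∫ r in s..t, α r) with hE
  have hE_cont : ContinuousOn E (uIcc s T) :=
    continuousOn_const.mul (continuousOn_exp.comp
      (continuousOn_primitive_interval' hα left_mem_uIcc) (mapsTo_univ _ _))
  have hsub : ∀ {t}, t ∈ Icc s T → uIcc s t ⊆ uIcc s T := fun ht =>
    uIcc_subset_uIcc_left (uIcc_of_le hsT ▸ ht)
  have hE_eq : ∀ t ∈ Icc s T, E t = σ + ∫ r in s..t, α r * E r := by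
    intro t ht
    simp only [hE]
    rw [exp_integral_eq_one_add_integral (hα.mono_set (hsub ht)), mul_add, mul_one,
      ← intervalIntegral.integral_const_mul]
    exact congrArg _ (integral_congr fun r _ => by ring)
  have he_cont : ContinuousOn (fun r => |u r - E r|) (Icc s T) := by
    rw [← uIcc_of_le hsT]; exact (hu.sub hE_cont).abs
  have he_eq : ∀ t ∈ Icc s T, u t - E t = ∫ r in s..t, (α r * (u r - E r) + g r) := by
    intro t ht
    have hαI := hα.mono_set (hsub ht)
    rw [hu_eq t ht, hE_eq t ht, add_sub_add_left_eq_sub, ← integral_sub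
      ((hαI.mul_continuousOn (hu.mono (hsub ht))).add (hg.mono_set (hsub ht)))
      (hαI.mul_continuousOn (hE_cont.mono (hsub ht)))]
    exact integral_congr fun r _ => by ring
  have hM : 0 ≤ M := (abs_nonneg _).trans (hgM s ⟨le_rfl, hsT⟩)
  refine le_mul_exp_of_le_add_mul_integral hL he_cont fun t ht => ?_
  have heI : IntervalIntegrable (fun r => |u r - E r|) volume s t :=
    (he_cont.mono (Icc_subset_Icc_right ht.2)).intervalIntegrable_of_Icc ht.1
  have hdom : IntervalIntegrable (fun r => L * |u r - E r| + M) volume s t :=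
    (heI.const_mul L).add intervalIntegrable_const
  calc |u t - E t| ≤ ∫ r in s..t, (L * |u r - E r| + M) := by
        rw [he_eq t ht, ← Real.norm_eq_abs]
        refine norm_integral_le_of_norm_le ht.1 (.of_forall fun r hr => ?_) hdom
        have hr' : r ∈ Icc s T := ⟨hr.1.le, hr.2.trans ht.2⟩
        calc ‖α r * (u r - E r) + g r‖ ≤ |α r| * |u r - E r| + |g r| := by
              rw [Real.norm_eq_abs, ← abs_mul]; exact abs_add_le _ _
          _ ≤ L * |u r - E r| + M := by gcongr; exacts [hαL r hr', hgM r hr']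
    _ = M * (t - s) + L * ∫ r in s..t, |u r - E r| := by
        rw [integral_add (heI.const_mul L) intervalIntegrable_const,
          intervalIntegral.integral_const_mul, intervalIntegral.integral_const, smul_eq_mul]
        ring
    _ ≤ M * (T - s) + L * ∫ r in s..t, |u r - E r| := by gcongr; exact ht.2

theorem abs_sum_mul_le {ι : Type*} [Fintype ι] {L : ℝ} {γ x : ι → ℝ} (hγ : ∀ k, |γ k| ≤ L) :
    |∑ k, γ k * x k| ≤ L * ∑ k, |x k| := by
  rw [Finset.mul_sum]
  refine (Finset.abs_sum_le_sum_abs _ _).trans (Finset.sum_le_sum fun k _ => ?_)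
  rw [abs_mul]
  exact mul_le_mul_of_nonneg_right (hγ k) (abs_nonneg _)

theorem abs_mul_add_inv_mul_sum_le {N : ℕ} {α y L : ℝ} {γ x : Fin N → ℝ} (hα : |α| ≤ L)
    (hγ : ∀ k, |γ k| ≤ L) :
    |α * y + (N : ℝ)⁻¹ * ∑ k, γ k * x k| ≤ L * |y| + (N : ℝ)⁻¹ * (L * ∑ k, |x k|) :=
  calc |α * y + (N : ℝ)⁻¹ * ∑ k, γ k * x k|
      ≤ |α| * |y| + (N : ℝ)⁻¹ * |∑ k, γ k * x k| :=
        (abs_add_le _ _).trans_eq (by rw [abs_mul, abs_mul, abs_inv, Nat.abs_cast])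
    _ ≤ L * |y| + (N : ℝ)⁻¹ * (L * ∑ k, |x k|) := by gcongr; exact abs_sum_mul_le hγ

theorem sum_abs_le_mul_exp_of_meanField {N : ℕ} {s T L : ℝ} {x : Fin N → ℝ}
    {a : Fin N → ℝ → ℝ} {c : Fin N → Fin N → ℝ → ℝ} {d : Fin N → ℝ → ℝ} (hL : 0 ≤ L)
    (haL : ∀ i, ∀ r ∈ Icc s T, |a i r| ≤ L) (hcL : ∀ i k, ∀ r ∈ Icc s T, |c i k r| ≤ L)
    (hd : ∀ i, ContinuousOn (d i) (Icc s T))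
    (hde : ∀ i, ∀ t ∈ Icc s T,
      d i t = x i + ∫ r in s..t, (a i r * d i r + (N : ℝ)⁻¹ * ∑ k, c i k r * d k r)) :
    ∀ t ∈ Icc s T, ∑ i, |d i t| ≤ (∑ i, |x i|) * exp (2 * L * (t - s)) := by
  set S : ℝ → ℝ := fun r => ∑ i, |d i r|
  set g : Fin N → ℝ → ℝ := fun i r => L * |d i r| + (N : ℝ)⁻¹ * (L * S r) with hg
  have hS_cont : ContinuousOn S (Icc s T) := continuousOn_finsetSum _ fun i _ => (hd i).abs
  have hg_cont : ∀ i, ContinuousOn (g i) (Icc s T) := fun i =>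
    (continuousOn_const.mul (hd i).abs).add
      (continuousOn_const.mul (continuousOn_const.mul hS_cont))
  refine le_mul_exp_of_le_add_mul_integral (by positivity) hS_cont fun t ht => ?_
  have hsub : Icc s t ⊆ Icc s T := Icc_subset_Icc_right ht.2
  have hgI : ∀ i, IntervalIntegrable (g i) volume s t := fun i =>
    ((hg_cont i).mono hsub).intervalIntegrable_of_Icc ht.1
  have hd_le : ∀ i, |d i t| ≤ |x i| + ∫ r in s..t, g i r := by
    intro i
    rw [hde i t ht]
    refine (abs_add_le _ _).trans (add_le_add_right ?_ _)
    rw [← Real.norm_eq_abs]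
    refine norm_integral_le_of_norm_le ht.1 (.of_forall fun r hr => ?_) (hgI i)
    have hr' : r ∈ Icc s T := hsub (Ioc_subset_Icc_self hr)
    exact abs_mul_add_inv_mul_sum_le (haL i r hr') fun k => hcL i k r hr'
  have hsum_g : ∀ r ∈ Icc s t, ∑ i, g i r ≤ 2 * L * S r := by
    intro r hr
    have hLS : 0 ≤ L * S r := mul_nonneg hL (Finset.sum_nonneg fun i _ => abs_nonneg _)
    simp only [hg, Finset.sum_add_distrib, ← Finset.mul_sum, Finset.sum_const, Finset.card_univ,
      Fintype.card_fin, nsmul_eq_mul, ← mul_assoc]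
    nlinarith [mul_inv_le_one (a := (N : ℝ))]
  calc S t ≤ ∑ i, (|x i| + ∫ r in s..t, g i r) := Finset.sum_le_sum fun i _ => hd_le i
    _ = (∑ i, |x i|) + ∫ r in s..t, ∑ i, g i r := by
        rw [Finset.sum_add_distrib, integral_finsetSum fun i _ => hgI i]
    _ ≤ (∑ i, |x i|) + ∫ r in s..t, 2 * L * S r := by
        gcongr
        refine integral_mono_on ht.1 ?_ ?_ hsum_g
        · exact ContinuousOn.intervalIntegrable_of_Icc ht.1
            ((continuousOn_finsetSum _ fun i _ => hg_cont i).mono hsub)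
        · exact ((continuousOn_const.mul hS_cont).mono hsub).intervalIntegrable_of_Icc ht.1
    _ = (∑ i, |x i|) + 2 * L * ∫ r in s..t, S r := by rw [intervalIntegral.integral_const_mul]

theorem statement11_general (σ L T : ℝ) (hL : 0 ≤ L) :
    ∃ C : ℝ,
      ∀ (N : ℕ), 0 < N → ∀ (s : ℝ), 0 ≤ s → s ≤ T → ∀ (j : Fin N)
        (a : Fin N → ℝ → ℝ) (c : Fin N → Fin N → ℝ → ℝ) (d : Fin N → ℝ → ℝ),
        (∀ i, Measurable (a i)) →
        (∀ i k, Measurable (c i k)) →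
        (∀ i, ∀ r ∈ Set.Icc s T, |a i r| ≤ L) →
        (∀ i k, ∀ r ∈ Set.Icc s T, |c i k r| ≤ L) →
        (∀ i, ContinuousOn (d i) (Set.Icc s T)) →
        (∀ i, ∀ t ∈ Set.Icc s T,
          d i t = (if i = j then σ else 0)
            + ∫ r in s..t, (a i r * d i r + (N : ℝ)⁻¹ * ∑ k, c i k r * d k r)) →
        ∀ t ∈ Set.Icc s T,
          |d j t - σ * Real.exp (∫ r in s..t, a j r)| ≤ C / N := by
  set B := |σ| * exp (2 * L * T)
  refine ⟨L * B * T * exp (L * T), fun N _ s hs hsT j a c d ha hc haL hcL hd hde t ht => ?_⟩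
  have hS : ∀ r ∈ Icc s T, ∑ k, |d k r| ≤ B := fun r hr => by
    refine (sum_abs_le_mul_exp_of_meanField hL haL hcL hd hde r hr).trans ?_
    simp only [apply_ite, abs_zero, Finset.sum_ite_eq', Finset.mem_univ, if_true]
    exact mul_le_mul_of_nonneg_left (exp_le_exp.2 (mul_le_mul_of_nonneg_left
      (by linarith [hr.2]) (by positivity))) (abs_nonneg σ)
  have hforcing : ∀ r ∈ Icc s T, |(N : ℝ)⁻¹ * ∑ k, c j k r * d k r| ≤ (N : ℝ)⁻¹ * (L * B) :=
    fun r hr => by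
      rw [abs_mul, abs_of_nonneg (by positivity)]
      gcongr
      exact (abs_sum_mul_le fun k => hcL j k r hr).trans (by gcongr; exact hS r hr)
  have hforcingI : IntervalIntegrable (fun r => (N : ℝ)⁻¹ * ∑ k, c j k r * d k r) volume s T := by
    refine IntervalIntegrable.const_mul ?_ _
    simpa only [Finset.sum_fn] using IntervalIntegrable.sum Finset.univ fun k _ =>
      (IntervalIntegrable.of_abs_le hsT (hc j k) (hcL j k)).mul_continuousOn
        (uIcc_of_le hsT ▸ hd k)
  calc _ ≤ (N : ℝ)⁻¹ * (L * B) * (T - s) * exp (L * (t - s)) :=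
        abs_sub_mul_exp_integral_le hL (IntervalIntegrable.of_abs_le hsT (ha j) (haL j))
          hforcingI (haL j) hforcing (hd j) (fun t ht => by rw [hde j t ht, if_pos rfl]) t ht
    _ ≤ (N : ℝ)⁻¹ * (L * B) * T * exp (L * T) := by
        gcongr
        · exact mul_nonneg (by positivity) (hs.trans hsT)
        · linarith
        · linarith [ht.2]
    _ = L * B * T * exp (L * T) / N := by ring

/-- Proposition 4.1 mechanism: the diagonal solution `d^j` of the
linear Volterra system characterizing `D_s^j X^{i,N}_t` is within `C/N` of the exponential
`σ exp(∫_s^t a^j(r) dr)`, with `C` depending only on `σ`, `L`, `T`. -/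
theorem statement11 (σ L T : ℝ) (hσ : 0 < σ) (hL : 0 ≤ L) (hT : 0 ≤ T) :
    ∃ C : ℝ,
      ∀ (N : ℕ), 0 < N → ∀ (s : ℝ), 0 ≤ s → s ≤ T → ∀ (j : Fin N)
        (a : Fin N → ℝ → ℝ) (c : Fin N → Fin N → ℝ → ℝ) (d : Fin N → ℝ → ℝ),
        (∀ i, Measurable (a i)) →
        (∀ i k, Measurable (c i k)) →
        (∀ i, ∀ r ∈ Set.Icc s T, |a i r| ≤ L) →
        (∀ i k, ∀ r ∈ Set.Icc s T, |c i k r| ≤ L) →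
        (∀ i, ContinuousOn (d i) (Set.Icc s T)) →
        (∀ i, ∀ t ∈ Set.Icc s T,
          d i t = (if i = j then σ else 0)
            + ∫ r in s..t, (a i r * d i r + (N : ℝ)⁻¹ * ∑ k, c i k r * d k r)) →
        ∀ t ∈ Set.Icc s T,
          |d j t - σ * Real.exp (∫ r in s..t, a j r)| ≤ C / N :=
  statement11_general σ L T hL
end
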